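/- Suppose q = r and r ∤ Δ. Then for all 0 ≤ j, k ≤ r−1 with j ≠ k one has v_r(γ_k − γ_j) = 1/(r−1). -/

import Mathlib

open Polynomial

/-- The unique valuation on an algebraic closure of `ℚ_r` extending the `r`-adic
valuation, normalized by `v r = 1`. -/
def IsExtVal (q : ℕ) [Fact q.Prime] {K : Type*} [Field K] [Algebra ℚ_[q] K]
    (v : K → WithTop ℚ) : Prop :=
  (∀ x, v x = ⊤ ↔ x = 0) ∧
  (∀ x y, v (x * y) = v x + v y) ∧
  (∀ x y, min (v x) (v y) ≤ v (x + y)) ∧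
  (∀ x : ℚ_[q], x ≠ 0 → v (algebraMap ℚ_[q] K x) = ((x.valuation : ℚ) : WithTop ℚ))

section Aux
variable {r : ℕ} [Fact r.Prime] {K : Type*} [Field K] [Algebra ℚ_[r] K]
  {v : K → WithTop ℚ} (hv : IsExtVal r v)

include hv

lemma v_ne_top {x : K} (hx : x ≠ 0) : v x ≠ ⊤ := fun h => hx ((hv.1 x).mp h)

lemma v_exists {x : K} (hx : x ≠ 0) : ∃ q : ℚ, v x = (q : WithTop ℚ) := by
  obtain ⟨q, hq⟩ := WithTop.ne_top_iff_exists.mp (v_ne_top hv hx)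
  exact ⟨q, hq.symm⟩

lemma v_one : v 1 = 0 := by
  obtain ⟨q, hq⟩ := v_exists hv (one_ne_zero (α := K))
  have h := hv.2.1 1 1
  rw [mul_one, hq] at h
  have : q = q + q := by exact_mod_cast h
  have : q = 0 := by linarith
  rw [hq, this]; rfl

lemma v_mul (x y : K) : v (x * y) = v x + v y := hv.2.1 x y

lemma v_neg (x : K) : v (-x) = v x := by
  have hm1 : v (-1 : K) = 0 := by
    obtain ⟨q, hq⟩ := v_exists hv (neg_ne_zero.mpr (one_ne_zero (α := K)))
    have h := hv.2.1 (-1) (-1)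
    rw [neg_mul_neg, one_mul, v_one hv, hq] at h
    have : (0 : ℚ) = q + q := by exact_mod_cast h
    have : q = 0 := by linarith
    rw [hq, this]; rfl
  have := hv.2.1 (-1) x
  rw [neg_one_mul] at this
  rw [this, hm1, zero_add]

lemma v_pow_eq {x : K} {q : ℚ} (h : v x = (q : WithTop ℚ)) (n : ℕ) :
    v (x ^ n) = ((n * q : ℚ) : WithTop ℚ) := by
  induction n with
  | zero => simpa using v_one hv
  | succ n ih =>
    rw [pow_succ, v_mul hv, ih, h, ← WithTop.coe_add, WithTop.coe_eq_coe]
    push_cast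
    ring

lemma v_zpow_zero {x : K} (h : v x = 0) (n : ℕ) : v (x ^ n) = 0 := by
  have := v_pow_eq hv (q := 0) (by simpa using h) n
  simpa using this


lemma v_int {m : ℤ} (hm : m ≠ 0) :
    v ((m : K)) = (((padicValInt r m : ℚ)) : WithTop ℚ) := by
  have h1 : ((m : K)) = algebraMap ℚ_[r] K ((m : ℚ_[r])) := by
    rw [map_intCast]
  have h2 : ((m : ℚ_[r])) ≠ 0 := by exact_mod_cast hm
  rw [h1, hv.2.2.2 _ h2, Padic.valuation_intCast]
  norm_num

lemma v_int_nonneg (m : ℤ) : 0 ≤ v ((m : K)) := by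
  rcases eq_or_ne m 0 with h | h
  · simp only [h, Int.cast_zero]
    rw [(hv.1 (0:K)).mpr rfl]
    exact le_top
  · rw [v_int hv h]
    exact_mod_cast Nat.cast_nonneg _

lemma v_int_zero {m : ℤ} (hm : ¬ (r : ℤ) ∣ m) : v ((m : K)) = 0 := by
  have hm0 : m ≠ 0 := fun h => hm (h ▸ dvd_zero _)
  rw [v_int hv hm0, padicValInt.eq_zero_of_not_dvd hm]
  norm_num

lemma v_r_eq_one : v ((r : ℕ) : K) = 1 := by
  have h1 : (((r:ℕ) : K)) = algebraMap ℚ_[r] K ((r : ℚ_[r])) := by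
    rw [map_natCast]
  have h2 : ((r : ℚ_[r])) ≠ 0 := by
    exact_mod_cast (Fact.out : r.Prime).ne_zero
  rw [h1, hv.2.2.2 _ h2, Padic.valuation_p]
  norm_num

lemma v_sub_ge {x y : K} : min (v x) (v y) ≤ v (x - y) := by
  have := hv.2.2.1 x (-y)
  rwa [v_neg hv, ← sub_eq_add_neg] at this

lemma v_mul_right_zero {x y : K} (hy : v y = 0) : v (x * y) = v x := by
  rw [v_mul hv, hy, add_zero]

lemma v_prod {ι : Type*} (s : Finset ι) (f : ι → K) :
    v (∏ i ∈ s, f i) = ∑ i ∈ s, v (f i) := by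
  classical
  induction s using Finset.induction_on with
  | empty => simpa using v_one hv
  | insert _ _ hx ih =>
    rw [Finset.prod_insert hx, Finset.sum_insert hx, v_mul hv, ih]

lemma v_sum_nonneg {ι : Type*} (s : Finset ι) (f : ι → K)
    (h : ∀ i ∈ s, 0 ≤ v (f i)) : 0 ≤ v (∑ i ∈ s, f i) := by
  classical
  induction s using Finset.induction_on with
  | empty =>
    simp only [Finset.sum_empty]
    rw [(hv.1 (0:K)).mpr rfl]; exact le_top
  | @insert i0 s' hx ih =>
    rw [Finset.sum_insert hx]
    refine le_trans ?_ (hv.2.2.1 _ _)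
    exact le_min (h i0 (Finset.mem_insert_self i0 s'))
      (ih fun i hi => h i (Finset.mem_insert_of_mem hi))

lemma v_dvd_le {a b c : K} (h : a = c * b) (hc : 0 ≤ v c) : v b ≤ v a := by
  rw [h, v_mul hv]
  calc v b = 0 + v b := (zero_add _).symm
  _ ≤ v c + v b := add_le_add_left hc _

lemma v_pow_one {x : K} {n : ℕ} (hn : 0 < n) (h : x ^ n = 1) : v x = 0 := by
  have hx : x ≠ 0 := by
    intro h0
    rw [h0, zero_pow hn.ne'] at h
    exact zero_ne_one h
  obtain ⟨q, hq⟩ := v_exists hv hx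
  have h2 := v_pow_eq hv hq n
  rw [h, v_one hv] at h2
  have h3 : (n : ℚ) * q = 0 := by exact_mod_cast h2.symm
  have hq0 : q = 0 := by
    rcases mul_eq_zero.mp h3 with h' | h'
    · exact ((Nat.cast_ne_zero (R := ℚ)).mpr hn.ne' h').elim
    · exact h'
  rw [hq, hq0, WithTop.coe_zero]

lemma v_one_sub_pow {ζ : K} (hζ : IsPrimitiveRoot ζ r) {m : ℕ} (hm : ¬ r ∣ m) :
    v (1 - ζ ^ m) = v (1 - ζ) := by
  have hrp : r.Prime := Fact.out
  have hrpos : 0 < r := hrp.pos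
  have hζ0 : v ζ = 0 := v_pow_one hv hrpos hζ.pow_eq_one
  have hcop : m.Coprime r := (Nat.coprime_comm.mp (hrp.coprime_iff_not_dvd.mpr hm))
  have heuler : m ^ (r - 1) ≡ 1 [MOD r] := by
    have := Nat.ModEq.pow_totient hcop
    rwa [Nat.totient_prime hrp] at this
  have hr2 : 2 ≤ r := hrp.two_le
  have hmpow : m * m ^ (r - 2) = m ^ (r - 1) := by
    rw [← pow_succ']
    congr 1
    omega
  have hM1 : 1 ≤ m * m ^ (r - 2) := by
    have hm0 : m ≠ 0 := by rintro rfl; exact hm (dvd_zero r)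
    have : 0 < m * m ^ (r - 2) := by positivity
    omega
  have heuler' : m * m ^ (r - 2) ≡ 1 [MOD r] := by rw [hmpow]; exact heuler
  obtain ⟨t, ht⟩ := (Nat.modEq_iff_dvd' hM1).mp heuler'.symm
  have hM : m * m ^ (r - 2) = r * t + 1 := by omega
  have e1 : (ζ ^ m) ^ (m ^ (r - 2)) = ζ := by
    rw [← pow_mul, hM, pow_add, pow_one, pow_mul, hζ.pow_eq_one, one_pow, one_mul]
  have c1 : 1 - ζ ^ m = (∑ i ∈ Finset.range m, ζ ^ i) * (1 - ζ) := by
    linear_combination geom_sum_mul ζ m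
  have c2 : 1 - ζ = (∑ i ∈ Finset.range (m ^ (r - 2)), (ζ ^ m) ^ i) * (1 - ζ ^ m) := by
    have g := geom_sum_mul (ζ ^ m) (m ^ (r - 2))
    rw [e1] at g
    linear_combination g
  have hs1 : 0 ≤ v (∑ i ∈ Finset.range m, ζ ^ i) :=
    v_sum_nonneg hv _ _ (fun i _ => by rw [v_zpow_zero hv hζ0])
  have hs2 : 0 ≤ v (∑ i ∈ Finset.range (m ^ (r - 2)), (ζ ^ m) ^ i) :=
    v_sum_nonneg hv _ _ (fun i _ => by
      rw [← pow_mul, v_zpow_zero hv hζ0])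
  exact le_antisymm (v_dvd_le hv c2 hs2) (v_dvd_le hv c1 hs1)

lemma v_one_sub_zeta {ζ : K} (hr5 : 5 ≤ r) (hζ : IsPrimitiveRoot ζ r) :
    v (1 - ζ) = ((1 / ((r : ℚ) - 1) : ℚ) : WithTop ℚ) := by
  classical
  have hrp : r.Prime := Fact.out
  have hrpos : 0 < r := hrp.pos
  haveI : NeZero r := ⟨hrpos.ne'⟩
  have hP : (X ^ r - 1 : K[X]) = ∏ ξ ∈ nthRootsFinset r (1 : K), (X - C ξ) :=
    X_pow_sub_one_eq_prod hrpos hζ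
  have h1mem : (1 : K) ∈ nthRootsFinset r (1 : K) := one_mem_nthRootsFinset hrpos
  have hP2 : (X - C (1:K)) * ∏ ξ ∈ (nthRootsFinset r (1 : K)).erase 1, (X - C ξ)
      = (X - C (1:K)) * ∑ i ∈ Finset.range r, X ^ i := by
    rw [← Finset.mul_prod_erase _ _ h1mem] at hP
    rw [← hP, map_one, mul_comm]
    exact (geom_sum_mul _ _).symm
  have hcancel : ∏ ξ ∈ (nthRootsFinset r (1 : K)).erase 1, (X - C ξ)
      = ∑ i ∈ Finset.range r, (X : K[X]) ^ i :=
    mul_left_cancel₀ (X_sub_C_ne_zero 1) hP2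
  have heval := congrArg (Polynomial.eval (1 : K)) hcancel
  rw [Polynomial.eval_prod, Polynomial.eval_finset_sum] at heval
  simp only [eval_sub, eval_X, eval_C, eval_pow, one_pow, Finset.sum_const,
    Finset.card_range, nsmul_eq_mul, mul_one] at heval
  -- heval : ∏ ξ ∈ erase, (1 - ξ) = (r : K)
  have hvsum : ∑ ξ ∈ (nthRootsFinset r (1 : K)).erase 1, v (1 - ξ) = 1 := by
    rw [← v_prod hv, heval, v_r_eq_one hv]
  have hvsame : ∀ ξ ∈ (nthRootsFinset r (1 : K)).erase 1, v (1 - ξ) = v (1 - ζ) := by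
    intro ξ hξ
    have hξ1 : ξ ≠ 1 := (Finset.mem_erase.mp hξ).1
    have hξr : ξ ^ r = 1 := (mem_nthRootsFinset hrpos 1).mp (Finset.mem_erase.mp hξ).2
    obtain ⟨i, hir, rfl⟩ := hζ.eq_pow_of_pow_eq_one hξr
    have hi0 : i ≠ 0 := by
      intro h0
      rw [h0, pow_zero] at hξ1
      exact hξ1 rfl
    have hnd : ¬ r ∣ i := fun hd => hi0 (Nat.eq_zero_of_dvd_of_lt hd hir)
    exact v_one_sub_pow hv hζ hnd
  rw [Finset.sum_congr rfl hvsame, Finset.sum_const, Finset.card_erase_of_mem h1mem,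
    hζ.card_nthRootsFinset] at hvsum
  have hζne1 : (1 : K) - ζ ≠ 0 := sub_ne_zero.mpr (hζ.ne_one (by omega)).symm
  obtain ⟨q, hq⟩ := v_exists hv hζne1
  rw [hq, ← WithTop.coe_nsmul] at hvsum
  have h2 : ((r - 1) • q : ℚ) = 1 := by exact_mod_cast hvsum
  have hq1 : ((r - 1 : ℕ) : ℚ) * q = 1 := by simpa [nsmul_eq_mul] using h2
  have hr1 : ((r - 1 : ℕ) : ℚ) = (r : ℚ) - 1 := by
    have h1r : (1:ℕ) ≤ r := by omega
    push_cast [h1r]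
    ring
  have hr' : (5:ℚ) ≤ (r:ℚ) := by exact_mod_cast hr5
  have hne : ((r:ℚ) - 1) ≠ 0 := by linarith
  rw [hr1] at hq1
  have hqv : q = 1 / ((r:ℚ) - 1) := by
    rw [eq_div_iff hne]
    linarith
  rw [hq, hqv]

lemma key_factor {ζ : K} (hζ : IsPrimitiveRoot ζ r) {z s : ℤ} (hz : z ≠ 0)
    {δ α₀ β₀ : K} (hδ : δ ^ 2 = ((s ^ 2 - 4 * z ^ r : ℤ) : K))
    (hα : α₀ ^ r = -(((s : K) + δ) / 2)) (hβ : β₀ ^ r = -(((s : K) - δ) / 2))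
    (hαβ : α₀ * β₀ = (z : K)) (hr5 : 5 ≤ r)
    (hrΔ : ¬ (r : ℤ) ∣ (s ^ 2 - 4 * z ^ r)) :
    ∀ ξ ∈ nthRootsFinset r (1 : K), v (α₀ - ξ * β₀) = 0 := by
  classical
  haveI : CharZero K := charZero_of_injective_algebraMap (algebraMap ℚ_[r] K).injective
  have hrp : r.Prime := Fact.out
  have hrpos : 0 < r := hrp.pos
  have hΔ0 : (s ^ 2 - 4 * z ^ r : ℤ) ≠ 0 := fun h => hrΔ (h ▸ dvd_zero _)
  have hΔK : ((s ^ 2 - 4 * z ^ r : ℤ) : K) ≠ 0 := Int.cast_ne_zero.mpr hΔ0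
  have vΔ : v (((s ^ 2 - 4 * z ^ r : ℤ) : K)) = 0 := v_int_zero hv hrΔ
  have hδ0 : δ ≠ 0 := by
    intro h
    rw [h] at hδ
    rw [zero_pow (two_ne_zero)] at hδ
    exact hΔK hδ.symm
  have vδ : v δ = 0 := by
    obtain ⟨q, hq⟩ := v_exists hv hδ0
    have h2 := v_pow_eq hv hq 2
    rw [hδ, vΔ] at h2
    have h3 : (2 : ℚ) * q = 0 := by exact_mod_cast h2.symm
    have : q = 0 := by linarith
    rw [hq, this, WithTop.coe_zero]
  have hβ0 : β₀ ≠ 0 := by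
    intro h
    rw [h, mul_zero] at hαβ
    exact hz (by exact_mod_cast hαβ.symm)
  have hα0 : α₀ ≠ 0 := by
    intro h
    rw [h, zero_mul] at hαβ
    exact hz (by exact_mod_cast hαβ.symm)
  have v2 : v (2 : K) = 0 := by
    have h2 : ¬ (r : ℤ) ∣ 2 := by
      intro hd
      have := Int.le_of_dvd (by norm_num) hd
      omega
    have := v_int_zero hv h2
    simpa using this
  have vhalf : ∀ x : K, v (x / 2) = v x := by
    intro x
    have h2ne : (2 : K) ≠ 0 := two_ne_zero
    have hinv : v ((2 : K)⁻¹) = 0 := by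
      have h := v_mul hv 2 (2 : K)⁻¹
      rw [mul_inv_cancel₀ h2ne, v_one hv, v2, zero_add] at h
      exact h.symm
    rw [div_eq_mul_inv, v_mul_right_zero hv hinv]
  have vs : 0 ≤ v ((s : K)) := v_int_nonneg hv s
  have vα : 0 ≤ v α₀ := by
    obtain ⟨q, hq⟩ := v_exists hv hα0
    have h1 := v_pow_eq hv hq r
    rw [hα, v_neg hv, vhalf] at h1
    have h2 : (0 : WithTop ℚ) ≤ v ((s : K) + δ) :=
      le_trans (le_min vs (by rw [vδ])) (hv.2.2.1 _ _)
    rw [h1] at h2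
    have h3 : (0 : ℚ) ≤ (r : ℚ) * q := by exact_mod_cast h2
    have h4 : (0 : ℚ) < (r : ℚ) := by exact_mod_cast hrpos
    have : 0 ≤ q := nonneg_of_mul_nonneg_right h3 h4
    rw [hq]
    exact_mod_cast this
  have vβ : 0 ≤ v β₀ := by
    obtain ⟨q, hq⟩ := v_exists hv hβ0
    have h1 := v_pow_eq hv hq r
    rw [hβ, v_neg hv, vhalf] at h1
    have h2 : (0 : WithTop ℚ) ≤ v ((s : K) - δ) :=
      le_trans (le_min vs (by rw [vδ])) (v_sub_ge hv)
    rw [h1] at h2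
    have h3 : (0 : ℚ) ≤ (r : ℚ) * q := by exact_mod_cast h2
    have h4 : (0 : ℚ) < (r : ℚ) := by exact_mod_cast hrpos
    have : 0 ≤ q := nonneg_of_mul_nonneg_right h3 h4
    rw [hq]
    exact_mod_cast this
  have vξβ : ∀ ξ ∈ nthRootsFinset r (1 : K), 0 ≤ v (α₀ - ξ * β₀) := by
    intro ξ hξ
    have hξ1 : ξ ^ r = 1 := (mem_nthRootsFinset hrpos 1).mp hξ
    have vξ : v ξ = 0 := v_pow_one hv hrpos hξ1
    have : 0 ≤ v (ξ * β₀) := by rw [v_mul hv, vξ, zero_add]; exact vβ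
    exact le_trans (le_min vα this) (v_sub_ge hv)
  have hprod : ∏ ξ ∈ nthRootsFinset r (1 : K), (α₀ - ξ * β₀) = -δ := by
    rw [← IsPrimitiveRoot.pow_sub_pow_eq_prod_sub_mul (x := α₀) (y := β₀) hrpos hζ]
    rw [hα, hβ]
    have h2ne : (2 : K) ≠ 0 := two_ne_zero
    field_simp
    ring
  have hsum : ∑ ξ ∈ nthRootsFinset r (1 : K), v (α₀ - ξ * β₀) = 0 := by
    rw [← v_prod hv, hprod, v_neg hv, vδ]
  intro ξ hξ
  have hle : v (α₀ - ξ * β₀) ≤ 0 := by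
    rw [← hsum]
    exact Finset.single_le_sum (f := fun ξ => v (α₀ - ξ * β₀)) (fun i hi => vξβ i hi) hξ
  exact le_antisymm hle (vξβ ξ hξ)

end Aux

/-- Theorem (cluster picture, case `q = r`, `r ∤ Δ`): for all `0 ≤ j, k ≤ r − 1`
with `j ≠ k`, `v_r (γ_k − γ_j) = 1/(r − 1)`. -/
theorem stmt_7 (r : ℕ) [Fact r.Prime] (hr5 : 5 ≤ r)
    {K : Type*} [Field K] [Algebra ℚ_[r] K] [IsAlgClosure ℚ_[r] K]
    (v : K → WithTop ℚ) (hv : IsExtVal r v)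
    (ζ : K) (hζ : IsPrimitiveRoot ζ r)
    (z s : ℤ) (hz : z ≠ 0)
    (δ α₀ β₀ : K) (hδ : δ ^ 2 = ((s ^ 2 - 4 * z ^ r : ℤ) : K))
    (hα : α₀ ^ r = -(((s : K) + δ) / 2)) (hβ : β₀ ^ r = -(((s : K) - δ) / 2))
    (hαβ : α₀ * β₀ = (z : K))
    (γ : ℤ → K) (hγ : ∀ j : ℤ, γ j = ζ ^ j * α₀ + ζ ^ (-j) * β₀)
    (hrΔ : ¬ (r : ℤ) ∣ (s ^ 2 - 4 * z ^ r)) :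
    ∀ j k : ℤ, 0 ≤ j → j < (r : ℤ) → 0 ≤ k → k < (r : ℤ) → j ≠ k →
      v (γ k - γ j) = (((1 : ℚ) / ((r : ℚ) - 1) : ℚ) : WithTop ℚ) := by
  have hrp : r.Prime := Fact.out
  have hrpos : 0 < r := hrp.pos
  have hζ0 : ζ ≠ 0 := by
    intro h
    have := hζ.pow_eq_one
    rw [h, zero_pow hrpos.ne'] at this
    exact zero_ne_one this
  have main : ∀ j k : ℤ, 0 ≤ j → j < (r : ℤ) → 0 ≤ k → k < (r : ℤ) → j < k →
      v (γ k - γ j) = (((1 : ℚ) / ((r : ℚ) - 1) : ℚ) : WithTop ℚ) := by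
    intro j k hj0 hjr hk0 hkr hjk
    have hfac : γ k - γ j
        = ζ ^ (j : ℤ) * (ζ ^ ((k - j).toNat) - 1) * (α₀ - ζ ^ (-j - k : ℤ) * β₀) := by
      rw [hγ, hγ]
      have hm : (((k - j).toNat : ℤ)) = k - j := Int.toNat_of_nonneg (by omega)
      have e1 : (ζ : K) ^ ((k - j).toNat) = ζ ^ (k - j : ℤ) := by rw [← zpow_natCast, hm]
      have e3 : ζ ^ (-k : ℤ) = ζ ^ (-j - k : ℤ) * ζ ^ (j : ℤ) := by
        rw [← zpow_add₀ hζ0]; congr 1; ring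
      have e4 : ζ ^ (-j : ℤ) = ζ ^ (-j - k : ℤ) * ζ ^ (k : ℤ) := by
        rw [← zpow_add₀ hζ0]; congr 1; ring
      have e2 : ζ ^ (k : ℤ) = ζ ^ (j : ℤ) * ζ ^ (k - j : ℤ) := by
        rw [← zpow_add₀ hζ0]; congr 1; ring
      rw [e1, e3, e4, e2]
      ring
    rw [hfac, v_mul hv, v_mul hv]
    have vζ : v ζ = 0 := v_pow_one hv hrpos hζ.pow_eq_one
    have vj : v (ζ ^ (j : ℤ)) = 0 := by
      have hj : ζ ^ (j : ℤ) = ζ ^ (j.toNat) := by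
        rw [← zpow_natCast]; congr 1; omega
      rw [hj, v_zpow_zero hv vζ]
    have vm : v (ζ ^ ((k - j).toNat) - 1) = (((1 : ℚ) / ((r : ℚ) - 1) : ℚ) : WithTop ℚ) := by
      have hmr : ¬ r ∣ (k - j).toNat := by
        intro hd
        have h1 : (k - j).toNat < r := by omega
        have h2 : (k - j).toNat ≠ 0 := by omega
        exact h2 (Nat.eq_zero_of_dvd_of_lt hd h1)
      rw [show ζ ^ ((k - j).toNat) - 1 = -(1 - ζ ^ ((k - j).toNat)) by ring, v_neg hv,
        v_one_sub_pow hv hζ hmr, v_one_sub_zeta hv hr5 hζ]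
    have vu : v (α₀ - ζ ^ (-j - k : ℤ) * β₀) = 0 := by
      apply key_factor hv hζ hz hδ hα hβ hαβ hr5 hrΔ
      rw [Polynomial.mem_nthRootsFinset hrpos]
      rw [← zpow_natCast (ζ ^ (-j - k : ℤ)) r, ← zpow_mul,
        show (-j - k) * (r : ℤ) = (r : ℤ) * (-j - k) by ring, zpow_mul, zpow_natCast,
        hζ.pow_eq_one, one_zpow]
    rw [vj, vm, vu, zero_add, add_zero]
  intro j k hj0 hjr hk0 hkr hjk
  rcases lt_or_gt_of_ne hjk with h | h
  · exact main j k hj0 hjr hk0 hkr h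
  · rw [← v_neg hv, neg_sub]
    exact main k j hk0 hkr hj0 hjr h
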